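/- Let V be the Verma module over the twisted Heisenberg-Virasoro algebra with c_I = 0, c_{L,I} ≠ 0, and h_I/c_{L,I} - 1 = -p with p ∈ ℤ_{>0}. If Λ = ∑_{i=0}^{p-1} x_i L(i-p)v + x_p v (with x_0 = 1 and x_i ∈ ℂ[I(-1),...,I(-i)] of degree -i) is a singular vector of weight p, then x_i = S_i(I(-1)/c_{L,I}, ..., I(-i)/c_{L,I}) for i = 1, ..., p-1. -/

import Mathlib

/-! Applying `I(p-k)` to `Λ`, commuting it past the polynomial coefficients (the `I(n)` commute)
and then past `L(i-p)` by `[L(m), I(n)] = -n I(m+n) - δ_{m+n,0} (m²+m) c_{L,I}` leaves, because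
`q ↦ q·v` is injective, the polynomial identity `k c_{L,I} x_k = ∑_{i<k} x_i I(i-k)`; here
`h_I = (1-p) c_{L,I}` is what turns the `i = k` term into `-k (p-k) c_{L,I} x_k`. After dividing
by `c_{L,I}` this is the recursion `k S_k = ∑_{i<k} S_i y_{k-i}`, obtained by differentiating
`exp (∑ y_n tⁿ / n) = ∑ S_r tʳ`, and it determines the `x_k` from `x_0 = 1`. -/

/-- The Schur polynomials `S_r(x_1, x_2, ...)`, defined as the coefficients of the
generating function `exp (∑_{n ≥ 1} (x_n/n) y^n) = ∑_{r ≥ 0} S_r y^r`.  Since the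
series `g = ∑_{n ≥ 1} (x_n/n) y^n` has zero constant term, the coefficient of `y^r`
in `exp g = ∑_k g^k / k!` only receives contributions from `k ≤ r`. -/
noncomputable def schur {A : Type*} [Ring A] [Algebra ℂ A] (x : ℕ → A) (r : ℕ) : A :=
  ∑ k ∈ Finset.range (r + 1),
    ((Nat.factorial k : ℂ)⁻¹) •
      (PowerSeries.coeff r
        ((PowerSeries.mk fun n => if n = 0 then 0 else ((n : ℂ)⁻¹) • x n) ^ k))

/-- The generalized binomial coefficient `binom(z, r) = z(z-1)⋯(z-r+1)/r!`. -/
noncomputable def cchoose (z : ℂ) (r : ℕ) : ℂ :=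
  (∏ i ∈ Finset.range r, (z - i)) / (Nat.factorial r)


/-- A representation of the twisted Heisenberg-Virasoro algebra `HVir` at level zero
(`C_I` acts by `0`), with the central elements `C_L`, `C_{LI}` acting by the scalars
`cL`, `cLI`. -/
structure HVirRep (V : Type*) [AddCommGroup V] [Module ℂ V] where
  L : ℤ → Module.End ℂ V
  I : ℤ → Module.End ℂ V
  cL : ℂ
  cLI : ℂ
  rel_LL : ∀ n m : ℤ, L n * L m - L m * L n =
    ((n : ℂ) - m) • L (n + m) +
      (if n + m = 0 then (((n : ℂ) ^ 3 - n) / 12) * cL else 0) • (1 : Module.End ℂ V)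
  rel_LI : ∀ n m : ℤ, L n * I m - I m * L n =
    (-(m : ℂ)) • I (n + m) -
      (if n + m = 0 then ((n : ℂ) ^ 2 + n) * cLI else 0) • (1 : Module.End ℂ V)
  rel_II : ∀ n m : ℤ, I n * I m = I m * I n

/-- The action of the monomial `∏_j I(-j-1)^{m(j)}` (an element of the commutative
algebra `ℂ[I(-1), I(-2), …]`, encoded by the finitely supported exponent function
`m : ℕ →₀ ℕ`, with the variable of index `j` standing for `I(-j-1)`). -/
noncomputable def monAct {V : Type*} [AddCommGroup V] [Module ℂ V]
    (I : ℤ → Module.End ℂ V) (m : ℕ →₀ ℕ) : Module.End ℂ V :=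
  ((m.support.sort (· ≤ ·)).map fun (j : ℕ) => I (-(j : ℤ) - 1) ^ m j).prod

/-- The action of a polynomial `q ∈ ℂ[I(-1), I(-2), …]` (encoded as a multivariate
polynomial whose variable of index `j` stands for `I(-j-1)`). -/
noncomputable def polyAct {V : Type*} [AddCommGroup V] [Module ℂ V]
    (I : ℤ → Module.End ℂ V) (q : MvPolynomial ℕ ℂ) : Module.End ℂ V :=
  ∑ m ∈ q.support, MvPolynomial.coeff m q • monAct I m

section Schur

open PowerSeries

variable {A : Type*} [CommRing A] [Algebra ℂ A]

noncomputable def expTrunc (N : ℕ) (f : PowerSeries A) : PowerSeries A :=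
  ∑ j ∈ Finset.range N, (j.factorial : ℂ)⁻¹ • f ^ j

theorem derivative_expTrunc_succ (N : ℕ) (f : PowerSeries A) :
    d⁄dX A (expTrunc (N + 1) f) = expTrunc N f * d⁄dX A f := by
  rw [expTrunc, expTrunc, Finset.sum_range_succ', Finset.sum_mul, map_add, map_sum]
  simp only [pow_zero, Derivation.map_smul_of_tower, Derivation.map_one_eq_zero, smul_zero,
    add_zero, Derivation.leibniz_pow, Nat.add_sub_cancel, smul_eq_mul]
  refine Finset.sum_congr rfl fun j _ => ?_
  rw [Nat.factorial_succ, ← Nat.cast_smul_eq_nsmul ℂ, smul_mul_assoc, smul_smul]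
  congr 1
  push_cast
  field_simp

variable (x : ℕ → A)

noncomputable def schurSeries : PowerSeries A :=
  PowerSeries.mk fun n => if n = 0 then 0 else ((n : ℂ)⁻¹) • x n

theorem coeff_derivative_schurSeries (n : ℕ) :
    coeff n (d⁄dX A (schurSeries x)) = x (n + 1) := by
  have hn : ((n : A) + 1) = algebraMap ℂ A ((n + 1 : ℕ) : ℂ) := by simp
  rw [coeff_derivative, schurSeries, coeff_mk, if_neg n.succ_ne_zero, hn, ← Algebra.commutes,
    ← Algebra.smul_def, smul_smul, mul_inv_cancel₀ (Nat.cast_ne_zero.mpr n.succ_ne_zero),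
    one_smul]

theorem schur_eq_coeff_expTrunc {r N : ℕ} (hr : r < N) :
    schur x r = coeff r (expTrunc N (schurSeries x)) := by
  have hX : X ∣ schurSeries x := X_dvd_iff.mpr (by simp [schurSeries])
  have hschur : schur x r = ∑ j ∈ Finset.range (r + 1),
      (j.factorial : ℂ)⁻¹ • coeff r (schurSeries x ^ j) := rfl
  rw [hschur, expTrunc, map_sum]
  simp only [coeff_smul]
  refine Finset.sum_subset (Finset.range_subset_range.mpr hr) fun j _ hj => ?_
  rw [X_pow_dvd_iff.mp (pow_dvd_pow_of_dvd hX j) r (by simpa using hj), smul_zero]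

/-- Compare coefficients in `(exp g)' = g' exp g`, truncated at the relevant degree. -/
theorem smul_schur_eq_sum (k : ℕ) :
    (k : ℂ) • schur x k = ∑ i ∈ Finset.range k, schur x i * x (k - i) := by
  cases k with
  | zero => simp
  | succ s =>
    rw [schur_eq_coeff_expTrunc x (Nat.lt_succ_self (s + 1)), Algebra.smul_def, map_natCast,
      mul_comm, Nat.cast_succ, ← coeff_derivative, derivative_expTrunc_succ, coeff_mul,
      Finset.Nat.sum_antidiagonal_eq_sum_range_succ_mk]
    refine Finset.sum_congr rfl fun i hi => ?_
    rw [Finset.mem_range] at hi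
    rw [coeff_derivative_schurSeries, ← schur_eq_coeff_expTrunc x hi]
    congr 2
    omega

theorem eq_schur_of_smul_eq_sum {y : ℕ → A} {N : ℕ} (hy0 : y 0 = 1)
    (hy : ∀ k, 1 ≤ k → k ≤ N → (k : ℂ) • y k = ∑ i ∈ Finset.range k, y i * x (k - i)) :
    ∀ k ≤ N, y k = schur x k := by
  intro k
  induction k using Nat.strong_induction_on with
  | _ k ih =>
    intro hk
    rcases Nat.eq_zero_or_pos k with rfl | hk0
    · simp [hy0, schur]
    · refine smul_right_injective A (Nat.cast_ne_zero.mpr hk0.ne' : (k : ℂ) ≠ 0) ?_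
      dsimp only
      rw [hy k hk0 hk, smul_schur_eq_sum]
      refine Finset.sum_congr rfl fun i hi => ?_
      have hik := Finset.mem_range.mp hi
      rw [ih i hik (by omega)]

end Schur

section PolyAct

variable {V : Type*} [AddCommGroup V] [Module ℂ V] {I : ℤ → Module.End ℂ V}

theorem commute_polyAct (hI : ∀ n m, I n * I m = I m * I n) (n : ℤ) (q : MvPolynomial ℕ ℂ) :
    Commute (I n) (polyAct I q) :=
  Commute.sum_right _ _ _ fun m _ => (Commute.list_prod_right _ _ fun _ hy => by
    obtain ⟨j, _, rfl⟩ := List.mem_map.mp hy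
    exact Commute.pow_right (hI n _) _).smul_right _

open scoped IsMulCommutative in
/-- Since the `I(n)` commute, `q ↦ q(I(-1), I(-2), …)` factors through the commutative
subalgebra they generate, where `MvPolynomial.aeval` applies. -/
theorem exists_algHom_eq_polyAct (hI : ∀ n m, I n * I m = I m * I n) :
    ∃ Φ : MvPolynomial ℕ ℂ →ₐ[ℂ] Module.End ℂ V,
      ⇑Φ = polyAct I ∧ ∀ j : ℕ, Φ (MvPolynomial.X j) = I (-(j : ℤ) - 1) := by
  classical
  let s : Set (Module.End ℂ V) := Set.range fun j : ℕ => I (-(j : ℤ) - 1)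
  have : IsMulCommutative (Algebra.adjoin ℂ s) := Algebra.isMulCommutative_adjoin ℂ (by
    rintro _ ⟨j, rfl⟩ _ ⟨k, rfl⟩
    exact hI _ _)
  let g : ℕ → Algebra.adjoin ℂ s := fun j => ⟨I (-(j : ℤ) - 1), Algebra.subset_adjoin ⟨j, rfl⟩⟩
  let Φ := (Algebra.adjoin ℂ s).val.comp (MvPolynomial.aeval g)
  have hmon : ∀ (m : ℕ →₀ ℕ) (c : ℂ), Φ (MvPolynomial.monomial m c) = c • monAct I m := by
    intro m c
    have hprod : (m.prod fun j e => g j ^ e) =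
        ((m.support.sort (· ≤ ·)).map fun j => g j ^ m j).prod := by
      rw [Finsupp.prod, Finset.prod_eq_multiset_prod, ← Finset.sort_eq m.support (· ≤ ·),
        Multiset.map_coe, Multiset.prod_coe]
    rw [AlgHom.comp_apply, MvPolynomial.aeval_monomial, hprod, ← Algebra.smul_def, map_smul,
      map_list_prod, List.map_map]
    rfl
  refine ⟨Φ, funext fun q => ?_, fun j => ?_⟩
  · conv_lhs => rw [q.as_sum]
    simp only [map_sum, hmon, polyAct]
  · simp [Φ, g]

end PolyAct

namespace HVirRep

variable {V : Type*} [AddCommGroup V] [Module ℂ V] {ρ : HVirRep V}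

theorem I_apply_L_apply (m n : ℤ) (w : V) :
    ρ.I m (ρ.L n w) = ρ.L n (ρ.I m w) + (m : ℂ) • ρ.I (n + m) w +
      (if n + m = 0 then ((n : ℂ) ^ 2 + n) * ρ.cLI else 0) • w := by
  have h := LinearMap.congr_fun (ρ.rel_LI n m) w
  simp only [LinearMap.sub_apply, Module.End.mul_apply, LinearMap.smul_apply,
    Module.End.one_apply] at h
  linear_combination (norm := module) -h

theorem I_apply_L_apply_of_highestWeight {v : V} {p i k : ℕ}
    (hIv : ∀ n : ℤ, 0 < n → ρ.I n v = 0) (hI0 : ρ.I 0 v = ((1 - (p : ℂ)) * ρ.cLI) • v)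
    (hk : k < p) :
    ρ.I ((p : ℤ) - k) (ρ.L ((i : ℤ) - p) v) =
      if i < k then ((p : ℂ) - k) • ρ.I ((i : ℤ) - k) v
      else if i = k then (-((k : ℂ) * ((p : ℂ) - k) * ρ.cLI)) • v else 0 := by
  rw [I_apply_L_apply, hIv _ (by omega), map_zero, zero_add,
    show (i : ℤ) - p + (p - k) = i - k by ring]
  push_cast
  rcases lt_trichotomy i k with hik | rfl | hki
  · rw [if_neg (by omega), if_pos hik, zero_smul, add_zero]
  · rw [if_pos (sub_self _), if_neg (lt_irrefl i), if_pos rfl, sub_self, hI0, smul_smul,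
      ← add_smul]
    congr 1
    ring
  · rw [if_neg (by omega), if_neg (by omega), if_neg (by omega), hIv _ (by omega), smul_zero,
      zero_smul, add_zero]

theorem I_apply_sum_polyAct_L_apply {v : V} {p k : ℕ}
    (hIv : ∀ n : ℤ, 0 < n → ρ.I n v = 0) (hI0 : ρ.I 0 v = ((1 - (p : ℂ)) * ρ.cLI) • v)
    {Φ : MvPolynomial ℕ ℂ →ₐ[ℂ] Module.End ℂ V} (hΦ : ⇑Φ = polyAct ρ.I)
    (hΦX : ∀ j : ℕ, Φ (MvPolynomial.X j) = ρ.I (-(j : ℤ) - 1)) (x : ℕ → MvPolynomial ℕ ℂ)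
    (hk : k < p) :
    ρ.I ((p : ℤ) - k) ((∑ i ∈ Finset.range p, polyAct ρ.I (x i) (ρ.L ((i : ℤ) - p) v)) +
        polyAct ρ.I (x p) v) =
      ((p : ℂ) - k) • Φ (∑ i ∈ Finset.range k, x i * MvPolynomial.X (k - i - 1) -
        ((k : ℂ) * ρ.cLI) • x k) v := by
  have hcomm : ∀ n q w, ρ.I n (Φ q w) = Φ q (ρ.I n w) := fun n q w => by
    rw [hΦ]
    exact LinearMap.congr_fun (commute_polyAct ρ.rel_II n q).eq w
  have hterm : ∀ i ∈ Finset.range p, ρ.I ((p : ℤ) - k) (Φ (x i) (ρ.L ((i : ℤ) - p) v)) =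
      (if i < k then ((p : ℂ) - k) • Φ (x i * MvPolynomial.X (k - i - 1)) v else 0) +
        if i = k then (-((k : ℂ) * ((p : ℂ) - k) * ρ.cLI)) • Φ (x k) v else 0 := by
    intro i _
    rw [hcomm, I_apply_L_apply_of_highestWeight hIv hI0 hk]
    rcases lt_trichotomy i k with hik | rfl | hki
    · rw [if_pos hik, if_pos hik, if_neg hik.ne, add_zero, map_smul, map_mul, hΦX,
        Module.End.mul_apply, show -((k - i - 1 : ℕ) : ℤ) - 1 = i - k by omega]
    · simp
    · rw [if_neg (by omega), if_neg (by omega), if_neg (by omega), if_neg (by omega), map_zero,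
        zero_add]
  have hfilter : ∑ i ∈ Finset.range p,
      (if i < k then ((p : ℂ) - k) • Φ (x i * MvPolynomial.X (k - i - 1)) v else 0) =
      ∑ i ∈ Finset.range k, ((p : ℂ) - k) • Φ (x i * MvPolynomial.X (k - i - 1)) v := by
    rw [← Finset.sum_filter]
    congr 1
    ext i
    simp only [Finset.mem_filter, Finset.mem_range]
    omega
  rw [← hΦ, map_add, map_sum, Finset.sum_congr rfl hterm, Finset.sum_add_distrib, hfilter,
    Finset.sum_ite_eq', if_pos (Finset.mem_range.mpr hk), hcomm, hIv _ (by omega), map_zero,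
    add_zero, map_sub, map_sum, map_smul, LinearMap.sub_apply, LinearMap.sum_apply,
    LinearMap.smul_apply, smul_sub, Finset.smul_sum, smul_smul, neg_smul, ← sub_eq_add_neg]
  congr 2
  ring

theorem smul_coeff_eq_sum_of_I_apply_eq_zero {v : V} {p k : ℕ}
    (hIv : ∀ n : ℤ, 0 < n → ρ.I n v = 0) (hI0 : ρ.I 0 v = ((1 - (p : ℂ)) * ρ.cLI) • v)
    (hinj : Function.Injective fun q : MvPolynomial ℕ ℂ => polyAct ρ.I q v)
    (x : ℕ → MvPolynomial ℕ ℂ) (hk : k < p)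
    (hsing : ρ.I ((p : ℤ) - k) ((∑ i ∈ Finset.range p, polyAct ρ.I (x i) (ρ.L ((i : ℤ) - p) v)) +
        polyAct ρ.I (x p) v) = 0) :
    ((k : ℂ) * ρ.cLI) • x k = ∑ i ∈ Finset.range k, x i * MvPolynomial.X (k - i - 1) := by
  obtain ⟨Φ, hΦ, hΦX⟩ := exists_algHom_eq_polyAct ρ.rel_II
  rw [I_apply_sum_polyAct_L_apply hIv hI0 hΦ hΦX x hk] at hsing
  have hpk : (p : ℂ) - k ≠ 0 := sub_ne_zero.mpr (by exact_mod_cast hk.ne')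
  refine (sub_eq_zero.mp (hinj ?_)).symm
  simp only [← hΦ, map_zero, LinearMap.zero_apply]
  exact (smul_eq_zero.mp hsing).resolve_left hpk

end HVirRep

theorem singular_vector_coefficients_general {V : Type*} [AddCommGroup V] [Module ℂ V]
    (ρ : HVirRep V) (v : V) (hc : ρ.cLI ≠ 0) (p : ℕ)
    (hIv : ∀ n : ℤ, 0 < n → ρ.I n v = 0)
    (hI0 : ρ.I 0 v = ((1 - (p : ℂ)) * ρ.cLI) • v)
    (hinj : Function.Injective fun q : MvPolynomial ℕ ℂ => polyAct ρ.I q v)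
    (x : ℕ → MvPolynomial ℕ ℂ) (hx0 : x 0 = 1)
    (Λ : V)
    (hΛ : Λ = (∑ i ∈ Finset.range p, polyAct ρ.I (x i) (ρ.L ((i : ℤ) - p) v)) +
      polyAct ρ.I (x p) v)
    (hsing : ∀ n : ℤ, 1 ≤ n → ρ.L n Λ = 0 ∧ ρ.I n Λ = 0) :
    ∀ i, 1 ≤ i → i ≤ p - 1 →
      x i = schur (fun j => MvPolynomial.C (ρ.cLI)⁻¹ * MvPolynomial.X (j - 1)) i := by
  have hrec : ∀ k, 1 ≤ k → k ≤ p - 1 → (k : ℂ) • x k =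
      ∑ i ∈ Finset.range k, x i * (MvPolynomial.C ρ.cLI⁻¹ * MvPolynomial.X (k - i - 1)) := by
    intro k _ hk
    have hkp : k < p := by omega
    have hIΛ := (hsing ((p : ℤ) - k) (by omega)).2
    rw [hΛ] at hIΛ
    calc (k : ℂ) • x k = ρ.cLI⁻¹ • (((k : ℂ) * ρ.cLI) • x k) := by
          rw [smul_smul, mul_left_comm, inv_mul_cancel₀ hc, mul_one]
      _ = _ := by
          rw [HVirRep.smul_coeff_eq_sum_of_I_apply_eq_zero hIv hI0 hinj x hkp hIΛ,
            Finset.smul_sum]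
          simp only [MvPolynomial.smul_eq_C_mul, mul_left_comm]
  intro i _ hi
  exact eq_schur_of_smul_eq_sum (fun j => MvPolynomial.C ρ.cLI⁻¹ * MvPolynomial.X (j - 1)) hx0
    hrec i hi

/-- Uniqueness of the coefficients of a singular vector of weight `p` in the Verma
module `V^{HVir}(c_L, 0, c_{L,I}, h, h_I)` with `h_I/c_{L,I} - 1 = -p`, `p ∈ ℤ_{>0}`
(Verma-ness of the `I`-part is encoded by injectivity of `q ↦ q·v`): if
`Λ = ∑_{i=0}^{p-1} x_i L(i-p) v + x_p v` is a singular vector, where `x_0 = 1` and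
`x_i ∈ ℂ[I(-1), …, I(-i)]` is of degree `-i` (i.e. weighted homogeneous of degree `i`
where `I(-j)` has weight `j`), then
`x_i = S_i(I(-1)/c_{L,I}, …, I(-i)/c_{L,I})` for `i = 1, …, p-1`. -/
theorem singular_vector_coefficients {V : Type*} [AddCommGroup V] [Module ℂ V]
    (ρ : HVirRep V) (v : V) (h : ℂ) (hc : ρ.cLI ≠ 0) (p : ℕ) (hp : 0 < p)
    (hLv : ∀ n : ℤ, 0 < n → ρ.L n v = 0) (hIv : ∀ n : ℤ, 0 < n → ρ.I n v = 0)
    (hL0 : ρ.L 0 v = h • v) (hI0 : ρ.I 0 v = ((1 - (p : ℂ)) * ρ.cLI) • v)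
    (hinj : Function.Injective fun q : MvPolynomial ℕ ℂ => polyAct ρ.I q v)
    (x : ℕ → MvPolynomial ℕ ℂ) (hx0 : x 0 = 1)
    (hxhom : ∀ i, i ≤ p → MvPolynomial.IsWeightedHomogeneous (fun j => j + 1) (x i) i)
    (Λ : V)
    (hΛ : Λ = (∑ i ∈ Finset.range p, polyAct ρ.I (x i) (ρ.L ((i : ℤ) - p) v)) +
      polyAct ρ.I (x p) v)
    (hsing : ∀ n : ℤ, 1 ≤ n → ρ.L n Λ = 0 ∧ ρ.I n Λ = 0) :
    ∀ i, 1 ≤ i → i ≤ p - 1 →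
      x i = schur (fun j => MvPolynomial.C (ρ.cLI)⁻¹ * MvPolynomial.X (j - 1)) i :=
  singular_vector_coefficients_general ρ v hc p hIv hI0 hinj x hx0 Λ hΛ hsing
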